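/- arXiv:1201.2344 — 4 statements merged into one kernel-verified Lean document; each statement's English description precedes it below -/
import Mathlib

section
/- Let 𝒞 be a connected component of the germ-grain surface ω̄ and let T be a hole of 𝒞, i.e. a bounded connected component of ℝ² ∖ 𝒞. Then every point x ∈ ℝ² with x ∉ 𝒞 and x ∉ T satisfies d(x,T)² ≥ d(x,𝒞)² + 2·d(x,𝒞)·R₀, where d(x,S) denotes the Euclidean infimum distance from the point x to the set S. -/
open Metric Set

/-- The germ-grain surface of a finite configuration: the union of the closed balls. -/
def surface (ω : Finset (EuclideanSpace ℝ (Fin 2) × ℝ)) : Set (EuclideanSpace ℝ (Fin 2)) :=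
  ⋃ p ∈ ω, Metric.closedBall p.1 p.2

/-- `C` is a connected component of `S`. -/
def IsCompOf (C S : Set (EuclideanSpace ℝ (Fin 2))) : Prop :=
  ∃ x ∈ S, C = connectedComponentIn S x

/-- `T` is a hole of `S`: a bounded connected component of the complement of `S`. -/
def IsHoleOf (T S : Set (EuclideanSpace ℝ (Fin 2))) : Prop :=
  (∃ t ∈ Sᶜ, T = connectedComponentIn Sᶜ t) ∧ Bornology.IsBounded T

open AffineMap

/-!
Let `d = infDist x C` and `t ∈ T`. Since `x` lies outside the hole `T`, the segment `[x, t]`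
meets `C`, hence meets one of the balls `B̄(y, R) ⊆ C` with `R ≥ R₀`; both `x` and `t` lie
outside that ball. A segment from `x` that enters the ball and leaves it again is at least as
long as the tangent from `x`, so `dist x t ^ 2 ≥ dist x y ^ 2 - R ^ 2`, while
`d ≤ dist x y - R`. Hence `dist x t ^ 2 ≥ d (d + 2R) ≥ d ^ 2 + 2 d R₀`.
-/

section InnerProductSpace

variable {E : Type*} [NormedAddCommGroup E] [InnerProductSpace ℝ E]

theorem dist_lineMap_sq (x t y : E) (b : ℝ) :
    dist (lineMap x t b) y ^ 2 =
      (1 - b) * dist x y ^ 2 + b * dist t y ^ 2 - b * (1 - b) * dist x t ^ 2 := by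
  have hz : lineMap x t b - y = (1 - b) • (x - y) + b • (t - y) := by
    rw [lineMap_apply_module]; module
  have hxt : x - t = (x - y) - (t - y) := by abel
  simp only [dist_eq_norm, hz, hxt, ← real_inner_self_eq_norm_sq, inner_add_left, inner_add_right,
    inner_sub_left, inner_sub_right, real_inner_smul_left, real_inner_smul_right]
  ring

theorem sq_dist_sub_sq_le_sq_dist_of_mem_segment {x t y z : E} {R : ℝ}
    (hz : z ∈ segment ℝ x t) (hzy : dist z y ≤ R) (hty : R < dist t y) :
    dist x y ^ 2 - R ^ 2 ≤ dist x t ^ 2 := by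
  obtain ⟨b, ⟨hb0, hb1⟩, rfl⟩ := (segment_eq_image_lineMap ℝ x t).subset hz
  have hR : 0 ≤ R := dist_nonneg.trans hzy
  have hzy2 : dist (lineMap x t b) y ^ 2 ≤ R ^ 2 := pow_le_pow_left₀ dist_nonneg hzy 2
  have hty2 : R ^ 2 < dist t y ^ 2 := pow_lt_pow_left₀ hty hR two_ne_zero
  have hb : b < 1 := by
    refine hb1.lt_of_ne fun h => ?_
    rw [h, lineMap_apply_one] at hzy
    linarith
  rw [dist_lineMap_sq] at hzy2
  have hmul : (1 - b) * (dist x y ^ 2 - R ^ 2) ≤ (1 - b) * (b * dist x t ^ 2) := by nlinarith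
  calc dist x y ^ 2 - R ^ 2 ≤ b * dist x t ^ 2 := le_of_mul_le_mul_left hmul (sub_pos.2 hb)
    _ ≤ dist x t ^ 2 := mul_le_of_le_one_left (sq_nonneg _) hb1

theorem infDist_le_dist_sub_of_closedBall_subset {C : Set E} {x y : E} {R : ℝ}
    (hR : 0 ≤ R) (hRxy : R ≤ dist x y) (hC : closedBall y R ⊆ C) :
    infDist x C ≤ dist x y - R := by
  rw [dist_comm] at hRxy ⊢
  have hcancel : R / dist y x * dist y x = R :=
    div_mul_cancel_of_imp fun h => le_antisymm (h ▸ hRxy) hR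
  have hw : lineMap y x (R / dist y x) ∈ closedBall y R := by
    rw [mem_closedBall, dist_lineMap_left, Real.norm_eq_abs,
      abs_of_nonneg (div_nonneg hR dist_nonneg), hcancel]
  calc infDist x C ≤ dist x (lineMap y x (R / dist y x)) := infDist_le_dist_of_mem (hC hw)
    _ = dist y x - R := by
      rw [dist_comm, dist_lineMap_right, Real.norm_eq_abs,
        abs_of_nonneg (sub_nonneg.2 (div_le_one_of_le₀ hRxy dist_nonneg)), sub_mul, one_mul,
        hcancel]

theorem exists_mem_segment_mem_of_notMem_connectedComponentIn {C : Set E} {x t : E}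
    (hx : x ∉ connectedComponentIn Cᶜ t) : ∃ z ∈ segment ℝ x t, z ∈ C := by
  by_contra! h
  exact hx <| (convex_segment x t).isPreconnected.subset_connectedComponentIn
    (right_mem_segment ℝ x t) h (left_mem_segment ℝ x t)

variable {C : Set E} {r : ℝ}
  (hC : ∀ z ∈ C, ∃ y R, r ≤ R ∧ z ∈ closedBall y R ∧ closedBall y R ⊆ C)
include hC

theorem sq_infDist_add_le_sq_dist_of_notMem_connectedComponentIn {x t : E} (hxC : x ∉ C)
    (htC : t ∉ C) (hx : x ∉ connectedComponentIn Cᶜ t) :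
    infDist x C ^ 2 + 2 * infDist x C * r ≤ dist x t ^ 2 := by
  obtain ⟨z, hz, hzC⟩ := exists_mem_segment_mem_of_notMem_connectedComponentIn hx
  obtain ⟨y, R, hrR, hzy, hball⟩ := hC z hzC
  have hR : 0 ≤ R := dist_nonneg.trans hzy
  have hxy : R < dist x y := not_le.1 fun h => hxC (hball h)
  have hty : R < dist t y := not_le.1 fun h => htC (hball h)
  have hd : infDist x C ≤ dist x y - R := infDist_le_dist_sub_of_closedBall_subset hR hxy.le hball
  have htangent := sq_dist_sub_sq_le_sq_dist_of_mem_segment hz hzy hty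
  nlinarith [infDist_nonneg (x := x) (s := C)]

theorem sq_infDist_add_le_sq_infDist_connectedComponentIn {x t : E} (hxC : x ∉ C) (htC : t ∉ C)
    (hx : x ∉ connectedComponentIn Cᶜ t) :
    infDist x C ^ 2 + 2 * infDist x C * r ≤ infDist x (connectedComponentIn Cᶜ t) ^ 2 := by
  refine (Real.sqrt_le_left infDist_nonneg).1 <|
    (le_infDist ⟨t, mem_connectedComponentIn htC⟩).2 fun s hs => ?_
  rw [connectedComponentIn_eq hs] at hx
  exact Real.sqrt_le_iff.2 ⟨dist_nonneg, sq_infDist_add_le_sq_dist_of_notMem_connectedComponentIn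
    hC hxC (connectedComponentIn_subset _ _ hs) hx⟩

end InnerProductSpace

theorem IsCompOf.exists_closedBall_subset {R₀ : ℝ} {ω : Finset (EuclideanSpace ℝ (Fin 2) × ℝ)}
    (hω : ∀ p ∈ ω, R₀ ≤ p.2) {C : Set (EuclideanSpace ℝ (Fin 2))} (hC : IsCompOf C (surface ω)) :
    ∀ z ∈ C, ∃ y R, R₀ ≤ R ∧ z ∈ closedBall y R ∧ closedBall y R ⊆ C := by
  obtain ⟨x₀, -, rfl⟩ := hC
  intro z hz
  obtain ⟨p, hp, hzp⟩ : ∃ p ∈ ω, z ∈ closedBall p.1 p.2 := by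
    simpa [surface] using connectedComponentIn_subset _ _ hz
  refine ⟨p.1, p.2, hω p hp, hzp, ?_⟩
  rw [connectedComponentIn_eq hz]
  exact (convex_closedBall p.1 p.2).isPreconnected.subset_connectedComponentIn hzp
    (subset_biUnion_of_mem (u := fun p : EuclideanSpace ℝ (Fin 2) × ℝ => closedBall p.1 p.2) hp)

theorem stmt_0_general (R₀ R₁ : ℝ)
    (ω : Finset (EuclideanSpace ℝ (Fin 2) × ℝ))
    (hω : ∀ p ∈ ω, p.2 ∈ Set.Icc R₀ R₁)
    (C T : Set (EuclideanSpace ℝ (Fin 2)))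
    (hC : IsCompOf C (surface ω))
    (hT : IsHoleOf T C)
    (x : EuclideanSpace ℝ (Fin 2)) (hxC : x ∉ C) (hxT : x ∉ T) :
    Metric.infDist x C ^ 2 + 2 * Metric.infDist x C * R₀ ≤ Metric.infDist x T ^ 2 := by
  obtain ⟨⟨t, htC, rfl⟩, -⟩ := hT
  exact sq_infDist_add_le_sq_infDist_connectedComponentIn
    (hC.exists_closedBall_subset fun p hp => (hω p hp).1) hxC htC hxT

theorem stmt_0 (R₀ R₁ : ℝ) (hR₀ : 0 < R₀) (hR₀₁ : R₀ ≤ R₁)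
    (ω : Finset (EuclideanSpace ℝ (Fin 2) × ℝ))
    (hω : ∀ p ∈ ω, p.2 ∈ Set.Icc R₀ R₁)
    (C T : Set (EuclideanSpace ℝ (Fin 2)))
    (hC : IsCompOf C (surface ω))
    (hT : IsHoleOf T C)
    (x : EuclideanSpace ℝ (Fin 2)) (hxC : x ∉ C) (hxT : x ∉ T) :
    Metric.infDist x C ^ 2 + 2 * Metric.infDist x C * R₀ ≤ Metric.infDist x T ^ 2 :=
  stmt_0_general R₀ R₁ ω hω C T hC hT x hxC hxT
end

section
/- Let 𝒞 and 𝒞' be two distinct connected components of the germ-grain surface ω̄, let (x,R) ∈ ω be such that B̄(x,R) ⊆ 𝒞, and let T' be a hole of 𝒞' (a bounded connected component of ℝ² ∖ 𝒞') with x ∉ T'. Then the Euclidean distance from x to T' is at least √3 · R₀. -/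
open Metric Set

/-!
Join `x` to a point `z` of the hole `T'` by a segment. The segment leaves `T'`, so it meets the
frontier of `T'`. As `T'` is a component of the open set `ℝ² ∖ 𝒞'`, that frontier lies in `𝒞'`,
hence in a grain `B̄(y, r) ⊆ 𝒞'`. This grain is disjoint from `B̄(x, R) ⊆ 𝒞`, so
`|x - y| > R + r`, and it misses `z ∈ T'`, so `|z - y| > r`. Stewart's theorem in the triangle
`x y z` then forces `|x - z|² > R² + 2Rr ≥ 3R₀²`.
-/

section Topology

variable {α : Type*} [TopologicalSpace α] {s u F : Set α} {x y : α}

theorem IsPreconnected.inter_frontier_nonempty (hs : IsPreconnected s)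
    (hsu : (s ∩ u).Nonempty) (hsu' : (s \ u).Nonempty) : (s ∩ frontier u).Nonempty := by
  rw [frontier_eq_closure_inter_closure]
  refine isPreconnected_closed_iff.1 hs _ _ isClosed_closure isClosed_closure ?_
    (hsu.mono (inter_subset_inter_right _ subset_closure))
    (hsu'.mono (inter_subset_inter_right _ subset_closure))
  intro z _
  by_cases hz : z ∈ u
  exacts [Or.inl (subset_closure hz), Or.inr (subset_closure hz)]

theorem disjoint_connectedComponentIn_of_ne
    (h : connectedComponentIn F x ≠ connectedComponentIn F y) :
    Disjoint (connectedComponentIn F x) (connectedComponentIn F y) :=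
  disjoint_left.2 fun _ hx hy ↦
    h <| (connectedComponentIn_eq hx).trans (connectedComponentIn_eq hy).symm

theorem IsPreconnected.subset_connectedComponentIn_of_mem (hs : IsPreconnected s) (hsF : s ⊆ F)
    (hy : y ∈ s) (hyx : y ∈ _root_.connectedComponentIn F x) :
    s ⊆ _root_.connectedComponentIn F x :=
  connectedComponentIn_eq hyx ▸ hs.subset_connectedComponentIn hy hsF

theorem IsClosed.connectedComponentIn (hF : IsClosed F) : IsClosed (connectedComponentIn F x) := by
  by_cases hx : x ∈ F
  · exact isClosed_of_closure_subset <| isPreconnected_connectedComponentIn.closure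
      |>.subset_connectedComponentIn (subset_closure (mem_connectedComponentIn hx))
      (closure_minimal (connectedComponentIn_subset F x) hF)
  · rw [connectedComponentIn_eq_empty hx]
    exact isClosed_empty

theorem IsOpen.frontier_connectedComponentIn_subset [LocallyConnectedSpace α] (hF : IsOpen F) :
    frontier (connectedComponentIn F x) ⊆ Fᶜ := by
  intro p hp hpF
  obtain ⟨q, hqp, hqx⟩ := mem_closure_iff.1 hp.1 _ hF.connectedComponentIn
    (mem_connectedComponentIn hpF)
  have : p ∈ connectedComponentIn F x :=
    connectedComponentIn_eq hqx ▸ connectedComponentIn_eq hqp ▸ mem_connectedComponentIn hpF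
  exact hF.connectedComponentIn.frontier_eq ▸ hp |>.2 this

end Topology

section InnerProductSpace

variable {E : Type*} [NormedAddCommGroup E] [InnerProductSpace ℝ E]

theorem norm_smul_add_smul_sq {a b : ℝ} (hab : a + b = 1) (u v : E) :
    ‖a • u + b • v‖ ^ 2 = a * ‖u‖ ^ 2 + b * ‖v‖ ^ 2 - a * b * ‖u - v‖ ^ 2 := by
  rw [norm_add_sq_real, norm_sub_sq_real, norm_smul, norm_smul, real_inner_smul_left,
    real_inner_smul_right, mul_pow, mul_pow, Real.norm_eq_abs, Real.norm_eq_abs, sq_abs, sq_abs]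
  obtain rfl := eq_sub_of_add_eq hab
  ring

/-- Stewart's theorem. -/
theorem dist_sq_of_mem_segment {x y z p : E} (hp : p ∈ segment ℝ x z) :
    ∃ a b : ℝ, 0 ≤ a ∧ 0 ≤ b ∧ a + b = 1 ∧
      dist p y ^ 2 = a * dist x y ^ 2 + b * dist z y ^ 2 - a * b * dist x z ^ 2 := by
  obtain ⟨a, b, ha, hb, hab, rfl⟩ := hp
  refine ⟨a, b, ha, hb, hab, ?_⟩
  have hpy : a • x + b • z - y = a • (x - y) + b • (z - y) := by
    rw [smul_sub, smul_sub, ← add_sub_add_comm, ← add_smul, hab, one_smul]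
  simp only [dist_eq_norm, hpy, norm_smul_add_smul_sq hab, sub_sub_sub_cancel_right]

theorem sq_add_two_mul_lt_dist_sq_of_mem_segment {x y z p : E} {R r : ℝ} (hR : 0 ≤ R)
    (hp : p ∈ segment ℝ x z) (hpy : dist p y ≤ r) (hxy : R + r < dist x y)
    (hzy : r < dist z y) : R ^ 2 + 2 * R * r < dist x z ^ 2 := by
  obtain ⟨a, b, ha, hb, hab, hstewart⟩ := dist_sq_of_mem_segment (y := y) hp
  have hr : 0 ≤ r := dist_nonneg.trans hpy
  have hp2 : dist p y ^ 2 ≤ r ^ 2 := pow_le_pow_left₀ dist_nonneg hpy 2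
  have hx2 : (R + r) ^ 2 < dist x y ^ 2 := pow_lt_pow_left₀ hxy (by positivity) two_ne_zero
  have hz2 : r ^ 2 < dist z y ^ 2 := pow_lt_pow_left₀ hzy hr two_ne_zero
  have ha : 0 < a := by
    refine ha.lt_of_ne' fun ha0 ↦ ?_
    obtain rfl : b = 1 := by linarith
    rw [ha0] at hstewart
    linarith
  -- Stewart with `|p - y|² ≤ r² = (a + b) r²` gives
  -- `a ((R + r)² - r²) < a b |x - z|² ≤ a |x - z|²`.
  refine lt_of_mul_lt_mul_left ?_ ha.le
  nlinarith [mul_lt_mul_of_pos_left hx2 ha, mul_le_mul_of_nonneg_left hz2.le hb,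
    mul_le_mul_of_nonneg_left (show b ≤ 1 by linarith) (mul_nonneg ha.le (sq_nonneg (dist x z)))]

end InnerProductSpace

theorem isClosed_surface (ω : Finset (EuclideanSpace ℝ (Fin 2) × ℝ)) : IsClosed (surface ω) :=
  isClosed_biUnion_finset fun _ _ ↦ isClosed_closedBall

theorem exists_closedBall_subset_connectedComponentIn_surface
    {ω : Finset (EuclideanSpace ℝ (Fin 2) × ℝ)} {p q : EuclideanSpace ℝ (Fin 2)}
    (hp : p ∈ connectedComponentIn (surface ω) q) :
    ∃ c ∈ ω, p ∈ closedBall c.1 c.2 ∧ closedBall c.1 c.2 ⊆ connectedComponentIn (surface ω) q := by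
  obtain ⟨c, hc, hpc⟩ : ∃ c ∈ ω, p ∈ closedBall c.1 c.2 :=
    bex_def.1 <| mem_iUnion₂.1 (connectedComponentIn_subset _ _ hp)
  have hcS : closedBall c.1 c.2 ⊆ surface ω := fun _ hw ↦ mem_biUnion hc hw
  exact ⟨c, hc, hpc,
    (convex_closedBall _ _).isPreconnected.subset_connectedComponentIn_of_mem hcS hpc hp⟩

theorem stmt_1_general (R₀ R₁ : ℝ) (hR₀ : 0 < R₀)
    (ω : Finset (EuclideanSpace ℝ (Fin 2) × ℝ))
    (hω : ∀ p ∈ ω, p.2 ∈ Set.Icc R₀ R₁)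
    (C C' : Set (EuclideanSpace ℝ (Fin 2)))
    (hC : IsCompOf C (surface ω)) (hC' : IsCompOf C' (surface ω)) (hne : C ≠ C')
    (x : EuclideanSpace ℝ (Fin 2)) (R : ℝ) (hmem : (x, R) ∈ ω)
    (hball : Metric.closedBall x R ⊆ C)
    (T' : Set (EuclideanSpace ℝ (Fin 2))) (hT' : IsHoleOf T' C') (hxT' : x ∉ T') :
    Real.sqrt 3 * R₀ ≤ Metric.infDist x T' := by
  obtain ⟨x₀, -, rfl⟩ := hC
  obtain ⟨x₁, -, rfl⟩ := hC'
  obtain ⟨⟨t, ht, rfl⟩, -⟩ := hT'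
  have hR := (hω _ hmem).1
  refine (le_infDist ⟨t, mem_connectedComponentIn ht⟩).2 fun z hz ↦ ?_
  obtain ⟨p, hpxz, hpT'⟩ := (convex_segment x z).isPreconnected.inter_frontier_nonempty
    ⟨z, right_mem_segment ℝ x z, hz⟩ ⟨x, left_mem_segment ℝ x z, hxT'⟩
  have hpC' : p ∈ connectedComponentIn (surface ω) x₁ := by
    simpa using (isClosed_surface ω).connectedComponentIn.isOpen_compl
      |>.frontier_connectedComponentIn_subset hpT'
  obtain ⟨⟨y, r⟩, hyr, hpy, hyrC'⟩ := exists_closedBall_subset_connectedComponentIn_surface hpC'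
  have hr := (hω _ hyr).1
  have hxy : R + r < dist x y := (disjoint_closedBall_closedBall_iff (hR₀.le.trans hR)
    (hR₀.le.trans hr)).1 <| (disjoint_connectedComponentIn_of_ne hne).mono hball hyrC'
  have hzy : r < dist z y := not_le.1 fun h ↦ connectedComponentIn_subset _ _ hz (hyrC' h)
  have hxz := sq_add_two_mul_lt_dist_sq_of_mem_segment (hR₀.le.trans hR) hpxz hpy hxy hzy
  refine le_of_lt <| lt_of_pow_lt_pow_left₀ 2 dist_nonneg ?_
  rw [mul_pow, Real.sq_sqrt zero_le_three]
  nlinarith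

theorem stmt_1 (R₀ R₁ : ℝ) (hR₀ : 0 < R₀) (hR₀₁ : R₀ ≤ R₁)
    (ω : Finset (EuclideanSpace ℝ (Fin 2) × ℝ))
    (hω : ∀ p ∈ ω, p.2 ∈ Set.Icc R₀ R₁)
    (C C' : Set (EuclideanSpace ℝ (Fin 2)))
    (hC : IsCompOf C (surface ω)) (hC' : IsCompOf C' (surface ω)) (hne : C ≠ C')
    (x : EuclideanSpace ℝ (Fin 2)) (R : ℝ) (hmem : (x, R) ∈ ω)
    (hball : Metric.closedBall x R ⊆ C)
    (T' : Set (EuclideanSpace ℝ (Fin 2))) (hT' : IsHoleOf T' C') (hxT' : x ∉ T') :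
    Real.sqrt 3 * R₀ ≤ Metric.infDist x T' :=
  stmt_1_general R₀ R₁ hR₀ ω hω C C' hC hC' hne x R hmem hball T' hT' hxT'
end

section
/- For every δ > 0 there exist ε > 0 and α > 0 with the following property: for all points x, y ∈ ℝ², every radius R ∈ [R₀, R₀ + ε] and every radius r ∈ [R₀, R₁], if the two-dimensional Lebesgue measure of B̄(x,R) ∩ B̄(y,r) is positive and at most α, then |d(x, B̄(y,r)) − R₀| ≤ δ, where d(x, B̄(y,r)) is the Euclidean infimum distance from x to the closed ball B̄(y,r). -/
/-!
Put `d = dist x y` and `c = min δ R₀`. If `d ≤ R + r - c`, the two balls overlap deeply enough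
to contain a common ball of radius `c / 2`, whose volume exceeds `α`. Hence `R + r - c < d`,
while `d ≤ R + r` since the balls meet. As `r ≤ d`, the distance from `x` to `B̄(y, r)` is
`d - r ∈ (R - c, R]`, which lies within `δ` of `R₀` once `R ∈ [R₀, R₀ + δ]`.
-/

open Metric Set MeasureTheory

section NormedSpace

variable {E : Type*} [NormedAddCommGroup E] [NormedSpace ℝ E]

theorem infDist_closedBall_of_le_dist {x y : E} {r : ℝ} (hr : 0 ≤ r) (h : r ≤ dist x y) :
    infDist x (closedBall y r) = dist x y - r := by
  refine le_antisymm ?_ ((le_infDist (nonempty_closedBall.2 hr)).2 fun z hz => ?_)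
  · obtain ⟨z, hxz, hzy⟩ :=
      exists_dist_le_le (sub_nonneg.2 h) hr (by linarith : dist x y ≤ r + (dist x y - r))
    exact (infDist_le_dist_of_mem (mem_closedBall.2 hzy)).trans hxz
  · linarith [dist_triangle x z y, mem_closedBall.1 hz]

theorem exists_closedBall_subset_inter_closedBall {x y : E} {R r s : ℝ} (hR : s ≤ R)
    (hr : s ≤ r) (h : dist x y ≤ R + r - 2 * s) :
    ∃ p, closedBall p s ⊆ closedBall x R ∩ closedBall y r := by
  obtain ⟨p, hxp, hpy⟩ := exists_dist_le_le (sub_nonneg.2 hR) (sub_nonneg.2 hr)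
    (by linarith : dist x y ≤ r - s + (R - s))
  refine ⟨p, subset_inter (closedBall_subset_closedBall' ?_) (closedBall_subset_closedBall' ?_)⟩
  · linarith [dist_comm p x]
  · linarith

theorem add_sub_lt_dist_of_measure_inter_closedBall_lt [MeasurableSpace E] [BorelSpace E]
    (μ : Measure E) [μ.IsAddHaarMeasure] {x y : E} {R r s : ℝ} (hR : s ≤ R) (hr : s ≤ r)
    (h : μ (closedBall x R ∩ closedBall y r) < μ (closedBall 0 s)) :
    R + r - 2 * s < dist x y := by
  by_contra! hxy
  obtain ⟨p, hp⟩ := exists_closedBall_subset_inter_closedBall hR hr hxy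
  rw [← Measure.addHaar_closedBall_center μ p] at h
  exact (measure_mono hp).not_gt h

end NormedSpace

theorem stmt_8_general (R₀ R₁ : ℝ) (hR₀ : 0 < R₀)
    (δ : ℝ) (hδ : 0 < δ) :
    ∃ ε > (0 : ℝ), ∃ α > (0 : ℝ),
      ∀ (x y : EuclideanSpace ℝ (Fin 2)) (R r : ℝ),
        R ∈ Set.Icc R₀ (R₀ + ε) → r ∈ Set.Icc R₀ R₁ →
        0 < volume (Metric.closedBall x R ∩ Metric.closedBall y r) →
        volume (Metric.closedBall x R ∩ Metric.closedBall y r) ≤ ENNReal.ofReal α →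
        |Metric.infDist x (Metric.closedBall y r) - R₀| ≤ δ := by
  set c := min δ R₀
  have hc : 0 < c := lt_min hδ hR₀
  obtain ⟨α, -, hα, hαc⟩ := ENNReal.lt_iff_exists_real_btwn.1
    (measure_closedBall_pos volume (0 : EuclideanSpace ℝ (Fin 2)) (half_pos hc))
  refine ⟨δ, hδ, α, ENNReal.ofReal_pos.1 hα, ?_⟩
  rintro x y R r ⟨hR₀R, hRδ⟩ ⟨hR₀r, -⟩ hpos hle
  have hcδ : c ≤ δ := min_le_left _ _
  have hcR₀ : c ≤ R₀ := min_le_right _ _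
  have hfar : R + r - 2 * (c / 2) < dist x y :=
    add_sub_lt_dist_of_measure_inter_closedBall_lt volume (by linarith) (by linarith)
      (hle.trans_lt hαc)
  have hnear : dist x y ≤ R + r :=
    dist_le_add_of_nonempty_closedBall_inter_closedBall (nonempty_of_measure_ne_zero hpos.ne')
  rw [infDist_closedBall_of_le_dist (by linarith) (by linarith), abs_le]
  constructor <;> linarith

theorem stmt_8 (R₀ R₁ : ℝ) (hR₀ : 0 < R₀) (hR₀₁ : R₀ ≤ R₁)
    (δ : ℝ) (hδ : 0 < δ) :
    ∃ ε > (0 : ℝ), ∃ α > (0 : ℝ),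
      ∀ (x y : EuclideanSpace ℝ (Fin 2)) (R r : ℝ),
        R ∈ Set.Icc R₀ (R₀ + ε) → r ∈ Set.Icc R₀ R₁ →
        0 < volume (Metric.closedBall x R ∩ Metric.closedBall y r) →
        volume (Metric.closedBall x R ∩ Metric.closedBall y r) ≤ ENNReal.ofReal α →
        |Metric.infDist x (Metric.closedBall y r) - R₀| ≤ δ :=
  stmt_8_general R₀ R₁ hR₀ δ hδ
end

section
/- Let ℓ > 2R₁ + 2R₀ and let ω be a locally finite configuration. For x ∈ V = (6ℓℤ)², let ξ_x(ω) = 1 if and only if both: (C1) each of the four translated cardinal boxes x+B_N, x+B_S, x+B_E, x+B_W contains at least one germ of ω lying in x+Δ; and (C2) exactly one connected component of ω̄_{x+Δ} (the union of the balls of ω with germ in x+Δ) contains a ball of ω centered in one of the four boxes x+B_N, x+B_S, x+B_E, x+B_W. Equip V with the graph structure in which x and y are adjacent if and only if y − x ∈ {±(6ℓ,0), ±(0,6ℓ)}. If the set {x ∈ V : ξ_x(ω) = 1} contains an infinite connected subset of this graph (i.e. percolation occurs in the site process {ξ_x}), then the germ-grain surface ω̄ contains an unbounded connected component. -/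
open Metric Set

/-- The point of the Euclidean plane with coordinates `(a, b)`. -/
def pt (a b : ℝ) : EuclideanSpace ℝ (Fin 2) := !₂[a, b]

/-- The germ-grain surface of a (possibly infinite) configuration. -/
def surfaceS (ω : Set (EuclideanSpace ℝ (Fin 2) × ℝ)) : Set (EuclideanSpace ℝ (Fin 2)) :=
  ⋃ p ∈ ω, Metric.closedBall p.1 p.2

/-- The germ-grain surface restricted to germs lying in `A`. -/
def surfaceInS (ω : Set (EuclideanSpace ℝ (Fin 2) × ℝ)) (A : Set (EuclideanSpace ℝ (Fin 2))) :
    Set (EuclideanSpace ℝ (Fin 2)) :=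
  {z | ∃ p ∈ ω, p.1 ∈ A ∧ z ∈ Metric.closedBall p.1 p.2}

/-- The diamond box `Δ`: the interior of the convex hull of the eight given points. -/
def diamond (ℓ : ℝ) : Set (EuclideanSpace ℝ (Fin 2)) :=
  interior (convexHull ℝ
    {pt (3 * ℓ) 0, pt (6 * ℓ) 0, pt (9 * ℓ) (3 * ℓ), pt (9 * ℓ) (6 * ℓ),
     pt (6 * ℓ) (9 * ℓ), pt (3 * ℓ) (9 * ℓ), pt 0 (6 * ℓ), pt 0 (3 * ℓ)})

/-- The axis-parallel square `(a,b) + [0,ℓ]²`. -/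
def box (a b ℓ : ℝ) : Set (EuclideanSpace ℝ (Fin 2)) :=
  {z | z 0 ∈ Set.Icc a (a + ℓ) ∧ z 1 ∈ Set.Icc b (b + ℓ)}

/-- The union of the four cardinal boxes `B_N ∪ B_S ∪ B_E ∪ B_W`. -/
def cardinalBoxes (ℓ : ℝ) : Set (EuclideanSpace ℝ (Fin 2)) :=
  box (4 * ℓ) (7 * ℓ) ℓ ∪ box (4 * ℓ) ℓ ℓ ∪ box (7 * ℓ) (4 * ℓ) ℓ ∪ box ℓ (4 * ℓ) ℓ

/-- Translate a set by a vector. -/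
def translateSet (x : EuclideanSpace ℝ (Fin 2)) (A : Set (EuclideanSpace ℝ (Fin 2))) :
    Set (EuclideanSpace ℝ (Fin 2)) :=
  (fun z => x + z) '' A

/-- The site variable `ξ_x` of the discretized process: condition (C1) and (C2)
in the translated diamond box `x + Δ`. -/
def xi (ℓ : ℝ) (ω : Set (EuclideanSpace ℝ (Fin 2) × ℝ)) (v : ℤ × ℤ) : Prop :=
  let x : EuclideanSpace ℝ (Fin 2) := pt (6 * ℓ * (v.1 : ℝ)) (6 * ℓ * (v.2 : ℝ))
  -- (C1): each translated cardinal box contains a germ of `ω` lying in `x + Δ`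
  ((∃ p ∈ ω, p.1 ∈ translateSet x (diamond ℓ) ∧ p.1 ∈ translateSet x (box (4 * ℓ) (7 * ℓ) ℓ)) ∧
   (∃ p ∈ ω, p.1 ∈ translateSet x (diamond ℓ) ∧ p.1 ∈ translateSet x (box (4 * ℓ) ℓ ℓ)) ∧
   (∃ p ∈ ω, p.1 ∈ translateSet x (diamond ℓ) ∧ p.1 ∈ translateSet x (box (7 * ℓ) (4 * ℓ) ℓ)) ∧
   (∃ p ∈ ω, p.1 ∈ translateSet x (diamond ℓ) ∧ p.1 ∈ translateSet x (box ℓ (4 * ℓ) ℓ))) ∧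
  -- (C2): exactly one connected component of `ω̄_{x+Δ}` contains a ball of `ω`
  -- centered in one of the four translated cardinal boxes
  (∃! C : Set (EuclideanSpace ℝ (Fin 2)),
    (∃ z ∈ surfaceInS ω (translateSet x (diamond ℓ)),
      C = connectedComponentIn (surfaceInS ω (translateSet x (diamond ℓ))) z) ∧
    ∃ q ∈ ω, q.1 ∈ translateSet x (diamond ℓ) ∧ q.1 ∈ translateSet x (cardinalBoxes ℓ) ∧
      Metric.closedBall q.1 q.2 ⊆ C)

/-- Adjacency of the square lattice `ℤ²` (which represents `(6ℓℤ)²`). -/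
def adjZ (a b : ℤ × ℤ) : Prop :=
  (b.1 = a.1 + 1 ∧ b.2 = a.2) ∨ (b.1 = a.1 - 1 ∧ b.2 = a.2) ∨
  (b.1 = a.1 ∧ b.2 = a.2 + 1) ∨ (b.1 = a.1 ∧ b.2 = a.2 - 1)

/-!
By (C1), two adjacent open sites share a germ: the cardinal box of one site facing the other
is the opposite cardinal box of the other, and all cardinal boxes lie inside the diamond. By (C2),
the balls centred at the cardinal-box germs of an open site lie in one component of
`ω̄_{x+Δ}`, hence of `ω̄`. Chaining along the infinite connected open cluster, all these germs
lie in a single component of `ω̄`. The germ of site `x` lies in `x + [0, 9ℓ]²`, and a bounded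
set meets only finitely many of these squares, so this component is unbounded.
-/

local notation "ℝ²" => EuclideanSpace ℝ (Fin 2)

lemma pt_apply_zero (a b : ℝ) : pt a b 0 = a := rfl

lemma pt_apply_one (a b : ℝ) : pt a b 1 = b := rfl

lemma pt_eta (z : ℝ²) : pt (z 0) (z 1) = z := by
  ext i; fin_cases i <;> rfl

lemma pt_add_pt (a b c d : ℝ) : pt a b + pt c d = pt (a + c) (b + d) := by
  ext i; fin_cases i <;> rfl

lemma smul_pt (r a b : ℝ) : r • pt a b = pt (r * a) (r * b) := by
  ext i; fin_cases i <;> rfl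

lemma pt_mem_segment_left {a b x : ℝ} (y : ℝ) (hx : x ∈ segment ℝ a b) :
    pt x y ∈ segment ℝ (pt a y) (pt b y) := by
  obtain ⟨s, t, hs, ht, hst, rfl⟩ := hx
  refine ⟨s, t, hs, ht, hst, ?_⟩
  rw [smul_pt, smul_pt, pt_add_pt, ← add_mul, hst, one_mul, smul_eq_mul, smul_eq_mul]

lemma pt_mem_segment_right (x : ℝ) {c d y : ℝ} (hy : y ∈ segment ℝ c d) :
    pt x y ∈ segment ℝ (pt x c) (pt x d) := by
  obtain ⟨s, t, hs, ht, hst, rfl⟩ := hy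
  refine ⟨s, t, hs, ht, hst, ?_⟩
  rw [smul_pt, smul_pt, pt_add_pt, ← add_mul, hst, one_mul, smul_eq_mul, smul_eq_mul]

lemma Convex.pt_mem_of_corners {K : Set ℝ²} (hK : Convex ℝ K) {a b c d x y : ℝ}
    (hx : x ∈ Icc a b) (hy : y ∈ Icc c d) (hac : pt a c ∈ K) (hbc : pt b c ∈ K)
    (had : pt a d ∈ K) (hbd : pt b d ∈ K) : pt x y ∈ K :=
  hK.segment_subset (hK.segment_subset hac hbc (pt_mem_segment_left c (Icc_subset_segment hx)))
    (hK.segment_subset had hbd (pt_mem_segment_left d (Icc_subset_segment hx)))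
    (pt_mem_segment_right x (Icc_subset_segment hy))

lemma pt_mem_diamond {ℓ x y : ℝ}
    (h : (x ∈ Ioo 0 (9 * ℓ) ∧ y ∈ Ioo (3 * ℓ) (6 * ℓ)) ∨
      (x ∈ Ioo (3 * ℓ) (6 * ℓ) ∧ y ∈ Ioo 0 (9 * ℓ))) :
    pt x y ∈ diamond ℓ := by
  set U : Set ℝ² := {z | (z 0 ∈ Ioo 0 (9 * ℓ) ∧ z 1 ∈ Ioo (3 * ℓ) (6 * ℓ)) ∨
      (z 0 ∈ Ioo (3 * ℓ) (6 * ℓ) ∧ z 1 ∈ Ioo 0 (9 * ℓ))}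
  have hU : IsOpen U := by
    have h0 : Continuous fun z : ℝ² => z 0 := by fun_prop
    have h1 : Continuous fun z : ℝ² => z 1 := by fun_prop
    exact ((isOpen_Ioo.preimage h0).inter (isOpen_Ioo.preimage h1)).union
      ((isOpen_Ioo.preimage h0).inter (isOpen_Ioo.preimage h1))
  refine interior_maximal (fun z hz => ?_) hU h
  have hK := convex_convexHull ℝ ({pt (3 * ℓ) 0, pt (6 * ℓ) 0, pt (9 * ℓ) (3 * ℓ),
    pt (9 * ℓ) (6 * ℓ), pt (6 * ℓ) (9 * ℓ), pt (3 * ℓ) (9 * ℓ), pt 0 (6 * ℓ), pt 0 (3 * ℓ)} :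
    Set ℝ²)
  rw [← pt_eta z]
  rcases hz with ⟨hz0, hz1⟩ | ⟨hz0, hz1⟩ <;>
    exact hK.pt_mem_of_corners (Ioo_subset_Icc_self hz0) (Ioo_subset_Icc_self hz1)
      (subset_convexHull ℝ _ (by simp)) (subset_convexHull ℝ _ (by simp))
      (subset_convexHull ℝ _ (by simp)) (subset_convexHull ℝ _ (by simp))

lemma cardinalBoxes_subset_diamond {ℓ : ℝ} (hℓ : 0 < ℓ) : cardinalBoxes ℓ ⊆ diamond ℓ := by
  intro z hz
  rw [← pt_eta z]
  apply pt_mem_diamond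
  simp only [cardinalBoxes, box, mem_union, mem_ofPred_eq, mem_Icc] at hz
  simp only [mem_Ioo]
  rcases hz with ((h | h) | h) | h
  · right; refine ⟨⟨?_, ?_⟩, ?_, ?_⟩ <;> linarith
  · right; refine ⟨⟨?_, ?_⟩, ?_, ?_⟩ <;> linarith
  · left; refine ⟨⟨?_, ?_⟩, ?_, ?_⟩ <;> linarith
  · left; refine ⟨⟨?_, ?_⟩, ?_, ?_⟩ <;> linarith

lemma cardinalBoxes_subset_box {ℓ : ℝ} (hℓ : 0 ≤ ℓ) : cardinalBoxes ℓ ⊆ box 0 0 (9 * ℓ) := by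
  intro z hz
  simp only [cardinalBoxes, box, mem_union, mem_ofPred_eq, mem_Icc] at hz ⊢
  rcases hz with ((h | h) | h) | h <;> refine ⟨⟨?_, ?_⟩, ?_, ?_⟩ <;> linarith

lemma translateSet_pt_box (X Y a b s : ℝ) :
    translateSet (pt X Y) (box a b s) = box (X + a) (Y + b) s := by
  ext z
  simp only [translateSet, image_add_left, box, mem_preimage, mem_ofPred_eq, mem_Icc,
    PiLp.add_apply, PiLp.neg_apply, pt_apply_zero, pt_apply_one]
  constructor <;> rintro ⟨⟨h1, h2⟩, h3, h4⟩ <;> refine ⟨⟨?_, ?_⟩, ?_, ?_⟩ <;> linarith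

lemma closedBall_subset_surfaceInS {ω : Set (ℝ² × ℝ)} {A : Set ℝ²} {p : ℝ² × ℝ} (hp : p ∈ ω)
    (hpA : p.1 ∈ A) : closedBall p.1 p.2 ⊆ surfaceInS ω A :=
  fun _ hz => ⟨p, hp, hpA, hz⟩

lemma surfaceInS_subset_surfaceS (ω : Set (ℝ² × ℝ)) (A : Set ℝ²) :
    surfaceInS ω A ⊆ surfaceS ω := by
  rintro z ⟨p, hp, -, hz⟩
  exact mem_biUnion hp hz

lemma closedBall_subset_connectedComponentIn_surfaceInS {ω : Set (ℝ² × ℝ)} {A : Set ℝ²}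
    {p : ℝ² × ℝ} (hp : p ∈ ω) (hpA : p.1 ∈ A) (hr : 0 ≤ p.2) :
    closedBall p.1 p.2 ⊆ connectedComponentIn (surfaceInS ω A) p.1 :=
  (convex_closedBall _ _).isPreconnected.subset_connectedComponentIn (mem_closedBall_self hr)
    (closedBall_subset_surfaceInS hp hpA)

def site (ℓ : ℝ) (v : ℤ × ℤ) : ℝ² :=
  pt (6 * ℓ * v.1) (6 * ℓ * v.2)

def cardinalGerms (ℓ : ℝ) (ω : Set (ℝ² × ℝ)) (v : ℤ × ℤ) : Set (ℝ² × ℝ) :=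
  {p ∈ ω | p.1 ∈ translateSet (site ℓ v) (diamond ℓ) ∧
    p.1 ∈ translateSet (site ℓ v) (cardinalBoxes ℓ)}

lemma mem_cardinalGerms_of_mem_translateSet {ℓ : ℝ} (hℓ : 0 < ℓ) {ω : Set (ℝ² × ℝ)}
    {v : ℤ × ℤ} {B : Set ℝ²} (hB : B ⊆ cardinalBoxes ℓ) {p : ℝ² × ℝ} (hp : p ∈ ω)
    (hpB : p.1 ∈ translateSet (site ℓ v) B) : p ∈ cardinalGerms ℓ ω v :=
  ⟨hp, image_mono (hB.trans (cardinalBoxes_subset_diamond hℓ)) hpB, image_mono hB hpB⟩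

lemma cardinalGerms_nonempty {ℓ : ℝ} {ω : Set (ℝ² × ℝ)} {v : ℤ × ℤ} (hv : xi ℓ ω v) :
    (cardinalGerms ℓ ω v).Nonempty := by
  obtain ⟨⟨⟨p, hp, hpD, hpN⟩, -⟩, -⟩ := hv
  exact ⟨p, hp, hpD, image_mono (fun _ h => Or.inl (Or.inl (Or.inl h))) hpN⟩

lemma exists_mem_cardinalGerms_of_adjZ {ℓ : ℝ} (hℓ : 0 < ℓ) {ω : Set (ℝ² × ℝ)}
    {u v : ℤ × ℤ} (huv : adjZ u v) (hu : xi ℓ ω u) :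
    (cardinalGerms ℓ ω u ∩ cardinalGerms ℓ ω v).Nonempty := by
  obtain ⟨⟨hN, hS, hE, hW⟩, -⟩ := hu
  have shared {a b a' b' : ℝ} (hB : box a b ℓ ⊆ cardinalBoxes ℓ)
      (hB' : box a' b' ℓ ⊆ cardinalBoxes ℓ) (ha : 6 * ℓ * u.1 + a = 6 * ℓ * v.1 + a')
      (hb : 6 * ℓ * u.2 + b = 6 * ℓ * v.2 + b')
      (h : ∃ p ∈ ω, p.1 ∈ translateSet (site ℓ u) (diamond ℓ) ∧
        p.1 ∈ translateSet (site ℓ u) (box a b ℓ)) :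
      (cardinalGerms ℓ ω u ∩ cardinalGerms ℓ ω v).Nonempty := by
    obtain ⟨p, hp, -, hpB⟩ := h
    have e : translateSet (site ℓ u) (box a b ℓ) = translateSet (site ℓ v) (box a' b' ℓ) := by
      simp only [site, translateSet_pt_box, ha, hb]
    exact ⟨p, mem_cardinalGerms_of_mem_translateSet hℓ hB hp hpB,
      mem_cardinalGerms_of_mem_translateSet hℓ hB' hp (e ▸ hpB)⟩
  have hBN : box (4 * ℓ) (7 * ℓ) ℓ ⊆ cardinalBoxes ℓ := fun _ h => Or.inl (Or.inl (Or.inl h))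
  have hBS : box (4 * ℓ) ℓ ℓ ⊆ cardinalBoxes ℓ := fun _ h => Or.inl (Or.inl (Or.inr h))
  have hBE : box (7 * ℓ) (4 * ℓ) ℓ ⊆ cardinalBoxes ℓ := fun _ h => Or.inl (Or.inr h)
  have hBW : box ℓ (4 * ℓ) ℓ ⊆ cardinalBoxes ℓ := fun _ h => Or.inr h
  rcases huv with ⟨h1, h2⟩ | ⟨h1, h2⟩ | ⟨h1, h2⟩ | ⟨h1, h2⟩
  · exact shared hBE hBW (by push_cast [h1]; ring) (by rw [h2]) hE
  · exact shared hBW hBE (by push_cast [h1]; ring) (by rw [h2]) hW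
  · exact shared hBN hBS (by rw [h1]) (by push_cast [h2]; ring) hN
  · exact shared hBS hBN (by rw [h1]) (by push_cast [h2]; ring) hS

lemma connectedComponentIn_surfaceS_eq_of_xi {ℓ : ℝ} {ω : Set (ℝ² × ℝ)}
    (hω : ∀ p ∈ ω, 0 ≤ p.2) {v : ℤ × ℤ} (hv : xi ℓ ω v) {p q : ℝ² × ℝ}
    (hp : p ∈ cardinalGerms ℓ ω v) (hq : q ∈ cardinalGerms ℓ ω v) :
    connectedComponentIn (surfaceS ω) p.1 = connectedComponentIn (surfaceS ω) q.1 := by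
  set F := surfaceInS ω (translateSet (site ℓ v) (diamond ℓ))
  have hcenter {r : ℝ² × ℝ} (hr : r ∈ cardinalGerms ℓ ω v) : r.1 ∈ F :=
    closedBall_subset_surfaceInS hr.1 hr.2.1 (mem_closedBall_self (hω r hr.1))
  obtain ⟨-, C, -, huniq⟩ := hv
  have hC {r : ℝ² × ℝ} (hr : r ∈ cardinalGerms ℓ ω v) : connectedComponentIn F r.1 = C :=
    huniq _ ⟨⟨r.1, hcenter hr, rfl⟩, r, hr.1, hr.2.1, hr.2.2,
      closedBall_subset_connectedComponentIn_surfaceInS hr.1 hr.2.1 (hω r hr.1)⟩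
  have hqp : q.1 ∈ connectedComponentIn F p.1 := by
    rw [hC hp, ← hC hq]
    exact mem_connectedComponentIn (hcenter hq)
  exact connectedComponentIn_eq
    (connectedComponentIn_mono p.1 (surfaceInS_subset_surfaceS ω _) hqp)

lemma connectedComponentIn_surfaceS_eq_of_reflTransGen {ℓ : ℝ} (hℓ : 0 < ℓ)
    {ω : Set (ℝ² × ℝ)} (hω : ∀ p ∈ ω, 0 ≤ p.2) {S : Set (ℤ × ℤ)} (hS : ∀ v ∈ S, xi ℓ ω v)
    {u v : ℤ × ℤ} (hu : u ∈ S)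
    (huv : Relation.ReflTransGen (fun a b => adjZ a b ∧ a ∈ S ∧ b ∈ S) u v)
    {p q : ℝ² × ℝ} (hp : p ∈ cardinalGerms ℓ ω u) (hq : q ∈ cardinalGerms ℓ ω v) :
    connectedComponentIn (surfaceS ω) p.1 = connectedComponentIn (surfaceS ω) q.1 := by
  induction huv generalizing q with
  | refl => exact connectedComponentIn_surfaceS_eq_of_xi hω (hS u hu) hp hq
  | tail _ hbc ih =>
    obtain ⟨hadj, hb, hc⟩ := hbc
    obtain ⟨r, hrb, hrc⟩ := exists_mem_cardinalGerms_of_adjZ hℓ hadj (hS _ hb)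
    rw [ih hrb]
    exact connectedComponentIn_surfaceS_eq_of_xi hω (hS _ hc) hrc hq

lemma finite_setOf_translateSet_box_inter_nonempty {ℓ : ℝ} (hℓ : 0 < ℓ) (a b s : ℝ)
    {B : Set ℝ²} (hB : Bornology.IsBounded B) :
    {v : ℤ × ℤ | (translateSet (site ℓ v) (box a b s) ∩ B).Nonempty}.Finite := by
  obtain ⟨M, hM⟩ := isBounded_iff_forall_norm_le.1 hB
  set K := (M + |a| + |b| + |s|) / (6 * ℓ)
  refine (isCompact_closedBall (0 : ℤ × ℤ) K).finite_of_discrete.subset ?_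
  rintro v ⟨y, hyv, hyB⟩
  rw [site, translateSet_pt_box] at hyv
  obtain ⟨⟨h1, h2⟩, h3, h4⟩ := hyv
  have hcoord {n : ℤ} {c y : ℝ} (hc : |c| ≤ |a| + |b|) (hy : |y| ≤ M)
      (hl : 6 * ℓ * n + c ≤ y) (hu : y ≤ 6 * ℓ * n + c + s) : dist n 0 ≤ K := by
    have h6ℓ : 0 < 6 * ℓ := by positivity
    have hn : |6 * ℓ * n| ≤ M + |a| + |b| + |s| := by
      obtain ⟨hy₁, hy₂⟩ := abs_le.1 hy
      obtain ⟨hc₁, hc₂⟩ := abs_le.1 hc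
      exact abs_le.2 ⟨by linarith [le_abs_self s], by linarith [abs_nonneg s]⟩
    rw [abs_mul, abs_of_pos h6ℓ] at hn
    rwa [Int.dist_eq, Int.cast_zero, sub_zero, le_div_iff₀' h6ℓ]
  rw [mem_closedBall, Prod.dist_eq]
  exact max_le
    (hcoord (by linarith [abs_nonneg b]) ((PiLp.norm_apply_le y 0).trans (hM y hyB)) h1 h2)
    (hcoord (by linarith [abs_nonneg a]) ((PiLp.norm_apply_le y 1).trans (hM y hyB)) h3 h4)

theorem stmt_14_general (R₀ R₁ ℓ : ℝ) (hR₀ : 0 < R₀) (hR₀₁ : R₀ ≤ R₁)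
    (hℓ : 2 * R₁ + 2 * R₀ < ℓ)
    (ω : Set (EuclideanSpace ℝ (Fin 2) × ℝ))
    (hrad : ∀ p ∈ ω, p.2 ∈ Set.Icc R₀ R₁)
    (hperc : ∃ S : Set (ℤ × ℤ), S.Infinite ∧ (∀ v ∈ S, xi ℓ ω v) ∧
      ∀ u ∈ S, ∀ v ∈ S,
        Relation.ReflTransGen (fun a b => adjZ a b ∧ a ∈ S ∧ b ∈ S) u v) :
    ∃ C : Set (EuclideanSpace ℝ (Fin 2)),
      (∃ z ∈ surfaceS ω, C = connectedComponentIn (surfaceS ω) z) ∧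
      ¬ Bornology.IsBounded C := by
  have hℓ0 : 0 < ℓ := by linarith
  have hω : ∀ p ∈ ω, 0 ≤ p.2 := fun p hp => hR₀.le.trans (hrad p hp).1
  have hcenter {p : ℝ² × ℝ} (hp : p ∈ ω) : p.1 ∈ surfaceS ω :=
    mem_biUnion hp (mem_closedBall_self (hω p hp))
  obtain ⟨S, hSinf, hxi, hconn⟩ := hperc
  obtain ⟨u, hu⟩ := hSinf.nonempty
  obtain ⟨p, hp⟩ := cardinalGerms_nonempty (hxi u hu)
  have hcomp {v : ℤ × ℤ} (hv : v ∈ S) {q : ℝ² × ℝ} (hq : q ∈ cardinalGerms ℓ ω v) :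
      q.1 ∈ connectedComponentIn (surfaceS ω) p.1 := by
    rw [connectedComponentIn_surfaceS_eq_of_reflTransGen hℓ0 hω hxi hu (hconn u hu v hv) hp hq]
    exact mem_connectedComponentIn (hcenter hq.1)
  refine ⟨_, ⟨p.1, hcenter hp.1, rfl⟩, fun hbdd => hSinf ?_⟩
  refine (finite_setOf_translateSet_box_inter_nonempty hℓ0 0 0 (9 * ℓ) hbdd).subset
    fun v hv => ?_
  obtain ⟨q, hq⟩ := cardinalGerms_nonempty (hxi v hv)
  exact ⟨q.1, image_mono (cardinalBoxes_subset_box hℓ0.le) hq.2.2, hcomp hv hq⟩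

theorem stmt_14 (R₀ R₁ ℓ : ℝ) (hR₀ : 0 < R₀) (hR₀₁ : R₀ ≤ R₁)
    (hℓ : 2 * R₁ + 2 * R₀ < ℓ)
    (ω : Set (EuclideanSpace ℝ (Fin 2) × ℝ))
    (hrad : ∀ p ∈ ω, p.2 ∈ Set.Icc R₀ R₁)
    (hlf : ∀ A : Set (EuclideanSpace ℝ (Fin 2)), Bornology.IsBounded A →
      {p ∈ ω | p.1 ∈ A}.Finite)
    (hperc : ∃ S : Set (ℤ × ℤ), S.Infinite ∧ (∀ v ∈ S, xi ℓ ω v) ∧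
      ∀ u ∈ S, ∀ v ∈ S,
        Relation.ReflTransGen (fun a b => adjZ a b ∧ a ∈ S ∧ b ∈ S) u v) :
    ∃ C : Set (EuclideanSpace ℝ (Fin 2)),
      (∃ z ∈ surfaceS ω, C = connectedComponentIn (surfaceS ω) z) ∧
      ¬ Bornology.IsBounded C :=
  stmt_14_general R₀ R₁ ℓ hR₀ hR₀₁ hℓ ω hrad hperc
end
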